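/- arXiv:2503.21814 — 6 statements merged into one kernel-verified Lean document; each statement's English description precedes it below -/
import Mathlib

section
/- Let A be the adjacency matrix of a graph G on n vertices with maximum clique size ω, and let D be the n×n matrix with entries D[i,j] = (n²)^(n - max(i,j)). If P₁ is a permutation matrix placing a maximum clique of G in the first ω positions (i.e., the leading ω×ω block of P₁ᵀ(J-I-A)P₁ is zero off-diagonal), then ⟨P₁ᵀ(J-I-A)P₁, D⟩ ≤ (n² - ω²)·(n²)^(n-ω-1), where ⟨X,Y⟩ = Σᵢⱼ X[i,j]Y[i,j]. -/
open Finset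

/-- If a permutation places a maximum clique in the first ω positions, then the
objective `⟨Pᵀ(J-I-A)P, D⟩` is at most `(n² - ω²)·(n²)^(n-ω-1)`. -/
theorem clique_perm_cost_upper_bound (n ω : ℕ) (G : SimpleGraph (Fin n))
    [DecidableRel G.Adj] (hω : G.cliqueNum = ω) (σ : Equiv.Perm (Fin n))
    (hblock : ∀ i j : Fin n, (i : ℕ) < ω → (j : ℕ) < ω → i ≠ j →
      (1 : ℝ) - (if σ i = σ j then 1 else 0) - G.adjMatrix ℝ (σ i) (σ j) = 0) :
    (∑ i : Fin n, ∑ j : Fin n,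
        ((1 : ℝ) - (if σ i = σ j then 1 else 0) - G.adjMatrix ℝ (σ i) (σ j)) *
          ((n : ℝ) ^ 2) ^ (n - 1 - max (i : ℕ) (j : ℕ))) ≤
      ((n : ℝ) ^ 2 - (ω : ℝ) ^ 2) * ((n : ℝ) ^ 2) ^ (n - ω - 1) := by
  have hωn : ω ≤ n := by
    obtain ⟨s, hs⟩ := G.exists_isNClique_cliqueNum
    have h1 := hs.card_eq
    rw [hω] at h1
    have h2 : s.card ≤ n := by simpa using s.card_le_univ
    omega
  set x : ℝ := (n : ℝ) ^ 2 with hx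
  have hx0 : (0 : ℝ) ≤ x := by positivity
  set K : ℝ := x ^ (n - ω - 1) with hK
  have hK0 : (0 : ℝ) ≤ K := by positivity
  have key : ∀ i j : Fin n,
      ((1 : ℝ) - (if σ i = σ j then 1 else 0) - G.adjMatrix ℝ (σ i) (σ j)) *
          x ^ (n - 1 - max (i : ℕ) (j : ℕ))
      ≤ (if (i : ℕ) < ω ∧ (j : ℕ) < ω then 0 else K) := by
    intro i j
    have hn1 : 1 ≤ n := i.pos
    have hx1 : (1 : ℝ) ≤ x := by
      have : (1 : ℝ) ≤ (n : ℝ) := by exact_mod_cast hn1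
      nlinarith
    by_cases hij : i = j
    · subst hij
      have h0 : ((1 : ℝ) - (if σ i = σ i then 1 else 0)
          - G.adjMatrix ℝ (σ i) (σ i)) = 0 := by
        simp [SimpleGraph.adjMatrix_apply]
      rw [h0, zero_mul]
      split <;> simp [hK0]
    · have hσ : σ i ≠ σ j := fun h => hij (σ.injective h)
      by_cases hb : (i : ℕ) < ω ∧ (j : ℕ) < ω
      · rw [hblock i j hb.1 hb.2 hij, zero_mul, if_pos hb]
      · rw [if_neg hb]
        have hB0 : (0 : ℝ) ≤ (1 : ℝ) - (if σ i = σ j then 1 else 0)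
            - G.adjMatrix ℝ (σ i) (σ j) := by
          simp only [if_neg hσ, SimpleGraph.adjMatrix_apply]
          split <;> norm_num
        have hB1 : (1 : ℝ) - (if σ i = σ j then 1 else 0)
            - G.adjMatrix ℝ (σ i) (σ j) ≤ 1 := by
          simp only [if_neg hσ, SimpleGraph.adjMatrix_apply]
          split <;> norm_num
        have hmax : ω ≤ max (i : ℕ) (j : ℕ) := by
          rcases not_and_or.mp hb with h | h <;> omega
        have hexp : n - 1 - max (i : ℕ) (j : ℕ) ≤ n - ω - 1 := by omega
        have hw : x ^ (n - 1 - max (i : ℕ) (j : ℕ)) ≤ K :=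
          pow_le_pow_right₀ hx1 hexp
        calc ((1 : ℝ) - (if σ i = σ j then 1 else 0) - G.adjMatrix ℝ (σ i) (σ j)) *
              x ^ (n - 1 - max (i : ℕ) (j : ℕ))
            ≤ 1 * x ^ (n - 1 - max (i : ℕ) (j : ℕ)) := by
              apply mul_le_mul_of_nonneg_right hB1 (by positivity)
          _ = x ^ (n - 1 - max (i : ℕ) (j : ℕ)) := one_mul _
          _ ≤ K := hw
  have step1 : (∑ i : Fin n, ∑ j : Fin n,
        ((1 : ℝ) - (if σ i = σ j then 1 else 0) - G.adjMatrix ℝ (σ i) (σ j)) *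
          x ^ (n - 1 - max (i : ℕ) (j : ℕ)))
      ≤ ∑ i : Fin n, ∑ j : Fin n, (if (i : ℕ) < ω ∧ (j : ℕ) < ω then 0 else K) :=
    Finset.sum_le_sum fun i _ => Finset.sum_le_sum fun j _ => key i j
  refine step1.trans_eq ?_
  have hsplit : ∀ i j : Fin n,
      (if (i : ℕ) < ω ∧ (j : ℕ) < ω then (0 : ℝ) else K)
      = K - (if (i : ℕ) < ω then (1 : ℝ) else 0) *
          (if (j : ℕ) < ω then (1 : ℝ) else 0) * K := by
    intro i j
    by_cases h1 : (i : ℕ) < ω <;> by_cases h2 : (j : ℕ) < ω <;>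
      simp [h1, h2]
  have hind : (∑ i : Fin n, (if (i : ℕ) < ω then (1 : ℝ) else 0)) = ω := by
    rw [Fin.sum_univ_eq_sum_range (fun k => if k < ω then (1 : ℝ) else 0)]
    rw [← Finset.sum_filter]
    have : (Finset.range n).filter (fun k => k < ω) = Finset.range ω := by
      ext k; simp; omega
    simp [this]
  have hdouble : (∑ i : Fin n, ∑ j : Fin n,
      ((if (i : ℕ) < ω then (1 : ℝ) else 0) * if (j : ℕ) < ω then 1 else 0) * K)
      = (ω : ℝ) * ((ω : ℝ) * K) := by
    simp only [mul_assoc, ← Finset.mul_sum]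
    rw [← Finset.sum_mul, hind, ← Finset.sum_mul, hind]
  simp only [hsplit, Finset.sum_sub_distrib, Finset.sum_const, card_univ,
    Fintype.card_fin, nsmul_eq_mul]
  rw [hdouble, hx]
  ring
end

section
/- Let A be the adjacency matrix of a graph G on n vertices with clique number ω < n, and D[i,j] = (n²)^(n - max(i,j)). If P₂ is a permutation matrix such that the vertices placed in the first ω positions do not all form a clique (some pair among the first ω positions is non-adjacent), then ⟨P₂ᵀ(J-I-A)P₂, D⟩ ≥ (n²)^(n-ω). -/
open Finset

/-- If a permutation does not place a clique in the first ω positions (some pair among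
the first ω positions is non-adjacent), then the objective is at least `(n²)^(n-ω)`. -/
theorem clique_perm_cost_lower_bound (n ω : ℕ) (G : SimpleGraph (Fin n))
    [DecidableRel G.Adj] (hω : G.cliqueNum = ω) (hωn : ω < n) (σ : Equiv.Perm (Fin n))
    (hbad : ∃ i j : Fin n, (i : ℕ) < ω ∧ (j : ℕ) < ω ∧ i ≠ j ∧ ¬ G.Adj (σ i) (σ j)) :
    ((n : ℝ) ^ 2) ^ (n - ω) ≤
      ∑ i : Fin n, ∑ j : Fin n,
        ((1 : ℝ) - (if σ i = σ j then 1 else 0) - G.adjMatrix ℝ (σ i) (σ j)) *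
          ((n : ℝ) ^ 2) ^ (n - 1 - max (i : ℕ) (j : ℕ)) := by
  obtain ⟨i, j, hi, hj, hij, hadj⟩ := hbad
  have hn1 : (1:ℝ) ≤ (n:ℝ)^2 := by
    have h : (1:ℝ) ≤ (n:ℝ) := by exact_mod_cast Nat.one_le_iff_ne_zero.mpr (by omega)
    nlinarith
  have hterm : ∀ a b : Fin n,
      (0:ℝ) ≤ ((1:ℝ) - (if σ a = σ b then 1 else 0) - G.adjMatrix ℝ (σ a) (σ b)) *
        ((n : ℝ) ^ 2) ^ (n - 1 - max (a:ℕ) (b:ℕ)) := by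
    intro a b
    rcases eq_or_ne a b with rfl | hab
    · simp
    · have hσ : σ a ≠ σ b := fun h => hab (σ.injective h)
      rw [if_neg hσ]
      have h1 : G.adjMatrix ℝ (σ a) (σ b) ≤ 1 := by
        rw [SimpleGraph.adjMatrix_apply]; split <;> norm_num
      have hp : (0:ℝ) ≤ ((n : ℝ) ^ 2) ^ (n - 1 - max (a:ℕ) (b:ℕ)) := by positivity
      nlinarith
  have key : ((n : ℝ) ^ 2) ^ (n - ω) ≤
      ((1:ℝ) - (if σ i = σ j then 1 else 0) - G.adjMatrix ℝ (σ i) (σ j)) *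
        ((n : ℝ) ^ 2) ^ (n - 1 - max (i:ℕ) (j:ℕ)) := by
    have hσ : σ i ≠ σ j := fun h => hij (σ.injective h)
    rw [if_neg hσ, SimpleGraph.adjMatrix_apply, if_neg hadj]
    rw [sub_zero, sub_zero, one_mul]
    apply pow_le_pow_right₀ hn1
    omega
  calc ((n : ℝ) ^ 2) ^ (n - ω) ≤ _ := key
    _ ≤ ∑ j' : Fin n, ((1:ℝ) - (if σ i = σ j' then 1 else 0) - G.adjMatrix ℝ (σ i) (σ j')) *
        ((n : ℝ) ^ 2) ^ (n - 1 - max (i:ℕ) (j':ℕ)) :=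
      Finset.single_le_sum (fun b _ => hterm i b) (Finset.mem_univ j)
    _ ≤ _ := Finset.single_le_sum (fun a _ => Finset.sum_nonneg fun b _ => hterm a b)
        (Finset.mem_univ i)
end

section
/- For n ≥ 1 and 1 ≤ ω ≤ n, we have (n² - ω²)·(n²)^(n-ω-1) < (n²)^(n-ω). Consequently, for the cost matrix D[i,j] = (n²)^(n-max(i,j)), any permutation placing a maximum clique in the first ω positions achieves strictly smaller cost ⟨Pᵀ(J-I-A)P, D⟩ than any permutation that does not. -/
open Finset

lemma coeff_eq {n : ℕ} (G : SimpleGraph (Fin n)) [DecidableRel G.Adj] (x y : Fin n) :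
    (1 : ℝ) - (if x = y then 1 else 0) - G.adjMatrix ℝ x y
      = if x ≠ y ∧ ¬ G.Adj x y then 1 else 0 := by
  simp only [SimpleGraph.adjMatrix_apply]
  by_cases h : x = y
  · subst h; simp [G.irrefl]
  · by_cases h2 : G.Adj x y <;> simp [h, h2]

/-- `(n² - ω²)·(n²)^(n-ω-1) < (n²)^(n-ω)`, and consequently any permutation placing a
maximum clique in the first ω positions achieves strictly smaller cost than any
permutation that does not. -/
theorem clique_perm_strict_comparison (n ω : ℕ) (hn : 1 ≤ n) (hω1 : 1 ≤ ω) (hωn : ω ≤ n)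
    (G : SimpleGraph (Fin n)) [DecidableRel G.Adj] (hω : G.cliqueNum = ω) :
    ((n : ℝ) ^ 2 - (ω : ℝ) ^ 2) * ((n : ℝ) ^ 2) ^ (n - ω - 1) < ((n : ℝ) ^ 2) ^ (n - ω) ∧
    ∀ σ τ : Equiv.Perm (Fin n),
      G.IsNClique ω ((Finset.univ.filter fun i : Fin n => (i : ℕ) < ω).image σ) →
      ¬ G.IsNClique ω ((Finset.univ.filter fun i : Fin n => (i : ℕ) < ω).image τ) →
      (∑ i : Fin n, ∑ j : Fin n,
          ((1 : ℝ) - (if σ i = σ j then 1 else 0) - G.adjMatrix ℝ (σ i) (σ j)) *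
            ((n : ℝ) ^ 2) ^ (n - 1 - max (i : ℕ) (j : ℕ))) <
        ∑ i : Fin n, ∑ j : Fin n,
          ((1 : ℝ) - (if τ i = τ j then 1 else 0) - G.adjMatrix ℝ (τ i) (τ j)) *
            ((n : ℝ) ^ 2) ^ (n - 1 - max (i : ℕ) (j : ℕ)) := by
  have hn1 : (1:ℝ) ≤ (n:ℝ) := by exact_mod_cast hn
  have hbase : (1:ℝ) ≤ (n:ℝ)^2 := by nlinarith
  have part1 : ((n : ℝ)^2 - (ω:ℝ)^2) * ((n:ℝ)^2)^(n-ω-1) < ((n:ℝ)^2)^(n-ω) := by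
    rcases eq_or_lt_of_le hωn with h | h
    · subst h
      simp only [sub_self, zero_mul]
      positivity
    · have he : n - ω = (n - ω - 1) + 1 := by omega
      rw [he, pow_succ]
      have hp : (0:ℝ) < ((n:ℝ)^2)^(n-ω-1) := by positivity
      have hω0 : (1:ℝ) ≤ (ω:ℝ) := by exact_mod_cast hω1
      have hlt : (n:ℝ)^2 - (ω:ℝ)^2 < (n:ℝ)^2 := by nlinarith
      calc ((n:ℝ)^2 - (ω:ℝ)^2) * ((n:ℝ)^2)^(n-ω-1)
          < (n:ℝ)^2 * ((n:ℝ)^2)^(n-ω-1) := mul_lt_mul_of_pos_right hlt hp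
        _ = ((n:ℝ)^2)^(n-ω-1) * (n:ℝ)^2 := mul_comm _ _
  refine ⟨part1, ?_⟩
  intro σ τ hσ hτ
  have hkey : ∀ π : Equiv.Perm (Fin n),
      (∑ i : Fin n, ∑ j : Fin n,
          ((1:ℝ) - (if π i = π j then 1 else 0) - G.adjMatrix ℝ (π i) (π j)) *
            ((n:ℝ)^2)^(n-1-max (i:ℕ) (j:ℕ)))
      = ∑ p : Fin n × Fin n,
          (if π p.1 ≠ π p.2 ∧ ¬ G.Adj (π p.1) (π p.2) then (1:ℝ) else 0) *
            ((n:ℝ)^2)^(n-1-max (p.1:ℕ) (p.2:ℕ)) := by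
    intro π
    rw [Fintype.sum_prod_type]
    exact Finset.sum_congr rfl fun i _ => Finset.sum_congr rfl fun j _ => by
      rw [coeff_eq]
  rw [hkey σ, hkey τ]
  have hwpos : ∀ p : Fin n × Fin n, (0:ℝ) < ((n:ℝ)^2)^(n-1-max (p.1:ℕ) (p.2:ℕ)) := by
    intro p; positivity
  have hcard : (univ.filter fun i : Fin n => (i : ℕ) < ω).card = ω := by
    have h : (univ.filter fun i : Fin n => (i : ℕ) < ω)
        = (univ : Finset (Fin ω)).map (Fin.castLEEmb hωn) := by
      ext x
      simp only [mem_filter, mem_univ, true_and, mem_map, Fin.castLEEmb_apply]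
      constructor
      · intro h; exact ⟨⟨x, h⟩, rfl⟩
      · rintro ⟨y, rfl⟩; simp
    simp [h]
  -- extract a non-edge in the first ω positions of τ
  have hSτcard : ((univ.filter fun i : Fin n => (i:ℕ) < ω).image τ).card = ω := by
    rw [Finset.card_image_of_injective _ τ.injective, hcard]
  have hnc : ¬ G.IsClique ((univ.filter fun i : Fin n => (i:ℕ) < ω).image τ : Finset (Fin n)) := by
    intro h; exact hτ ⟨h, hSτcard⟩
  rw [SimpleGraph.isClique_iff, Set.Pairwise] at hnc
  push_neg at hnc
  obtain ⟨x, hx, y, hy, hxy, hnadj⟩ := hnc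
  obtain ⟨i0, hi0, rfl⟩ := Finset.mem_image.mp (Finset.mem_coe.mp hx)
  obtain ⟨j0, hj0, rfl⟩ := Finset.mem_image.mp (Finset.mem_coe.mp hy)
  have hi0' : (i0:ℕ) < ω := (Finset.mem_filter.mp hi0).2
  have hj0' : (j0:ℕ) < ω := (Finset.mem_filter.mp hj0).2
  -- lower bound for τ
  have hτlow : ((n:ℝ)^2)^(n-ω) ≤ ∑ p : Fin n × Fin n,
      (if τ p.1 ≠ τ p.2 ∧ ¬ G.Adj (τ p.1) (τ p.2) then (1:ℝ) else 0) *
        ((n:ℝ)^2)^(n-1-max (p.1:ℕ) (p.2:ℕ)) := by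
    refine le_trans ?_ (Finset.single_le_sum
      (f := fun p : Fin n × Fin n =>
        (if τ p.1 ≠ τ p.2 ∧ ¬ G.Adj (τ p.1) (τ p.2) then (1:ℝ) else 0) *
          ((n:ℝ)^2)^(n-1-max (p.1:ℕ) (p.2:ℕ)))
      (fun p _ => mul_nonneg (by split <;> norm_num) (hwpos p).le)
      (Finset.mem_univ (i0, j0)))
    show ((n:ℝ)^2)^(n-ω) ≤
        (if τ i0 ≠ τ j0 ∧ ¬ G.Adj (τ i0) (τ j0) then (1:ℝ) else 0) *
          ((n:ℝ)^2)^(n-1-max (i0:ℕ) (j0:ℕ))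
    rw [if_pos ⟨hxy, hnadj⟩, one_mul]
    exact pow_le_pow_right₀ hbase (by omega)
  -- upper bound for σ
  have hσup : (∑ p : Fin n × Fin n,
      (if σ p.1 ≠ σ p.2 ∧ ¬ G.Adj (σ p.1) (σ p.2) then (1:ℝ) else 0) *
        ((n:ℝ)^2)^(n-1-max (p.1:ℕ) (p.2:ℕ)))
      ≤ ((n:ℝ)^2 - (ω:ℝ)^2) * ((n:ℝ)^2)^(n-ω-1) := by
    have hle : ∀ p : Fin n × Fin n,
        (if σ p.1 ≠ σ p.2 ∧ ¬ G.Adj (σ p.1) (σ p.2) then (1:ℝ) else 0) *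
          ((n:ℝ)^2)^(n-1-max (p.1:ℕ) (p.2:ℕ))
        ≤ if ω ≤ max (p.1:ℕ) (p.2:ℕ) then ((n:ℝ)^2)^(n-ω-1) else 0 := by
      intro p
      by_cases hm : ω ≤ max (p.1:ℕ) (p.2:ℕ)
      · rw [if_pos hm]
        calc (if σ p.1 ≠ σ p.2 ∧ ¬ G.Adj (σ p.1) (σ p.2) then (1:ℝ) else 0) *
              ((n:ℝ)^2)^(n-1-max (p.1:ℕ) (p.2:ℕ))
            ≤ 1 * ((n:ℝ)^2)^(n-1-max (p.1:ℕ) (p.2:ℕ)) :=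
              mul_le_mul_of_nonneg_right (by split <;> norm_num) (hwpos p).le
          _ = ((n:ℝ)^2)^(n-1-max (p.1:ℕ) (p.2:ℕ)) := one_mul _
          _ ≤ ((n:ℝ)^2)^(n-ω-1) := pow_le_pow_right₀ hbase (by omega)
      · rw [if_neg hm]
        have h1 : (p.1:ℕ) < ω := by omega
        have h2 : (p.2:ℕ) < ω := by omega
        have m1 : σ p.1 ∈ ((univ.filter fun i : Fin n => (i:ℕ) < ω).image σ) :=
          Finset.mem_image_of_mem _ (Finset.mem_filter.mpr ⟨mem_univ _, h1⟩)
        have m2 : σ p.2 ∈ ((univ.filter fun i : Fin n => (i:ℕ) < ω).image σ) :=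
          Finset.mem_image_of_mem _ (Finset.mem_filter.mpr ⟨mem_univ _, h2⟩)
        have hz : (if σ p.1 ≠ σ p.2 ∧ ¬ G.Adj (σ p.1) (σ p.2) then (1:ℝ) else 0) = 0 := by
          rcases eq_or_ne (σ p.1) (σ p.2) with he | hne
          · rw [if_neg]; tauto
          · have hadj := hσ.1 (Finset.mem_coe.mpr m1) (Finset.mem_coe.mpr m2) hne
            rw [if_neg]; tauto
        rw [hz, zero_mul]
    calc (∑ p : Fin n × Fin n,
          (if σ p.1 ≠ σ p.2 ∧ ¬ G.Adj (σ p.1) (σ p.2) then (1:ℝ) else 0) *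
            ((n:ℝ)^2)^(n-1-max (p.1:ℕ) (p.2:ℕ)))
        ≤ ∑ p : Fin n × Fin n, if ω ≤ max (p.1:ℕ) (p.2:ℕ) then ((n:ℝ)^2)^(n-ω-1) else 0 :=
          Finset.sum_le_sum fun p _ => hle p
      _ = (univ.filter fun p : Fin n × Fin n => ω ≤ max (p.1:ℕ) (p.2:ℕ)).card •
            ((n:ℝ)^2)^(n-ω-1) := by
          rw [← Finset.sum_filter, Finset.sum_const]
      _ = ((n:ℝ)^2 - (ω:ℝ)^2) * ((n:ℝ)^2)^(n-ω-1) := by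
          have hcardc : (univ.filter fun p : Fin n × Fin n => ¬ ω ≤ max (p.1:ℕ) (p.2:ℕ)).card
              = ω * ω := by
            have heq : (univ.filter fun p : Fin n × Fin n => ¬ ω ≤ max (p.1:ℕ) (p.2:ℕ))
                = (univ.filter fun i : Fin n => (i:ℕ) < ω) ×ˢ
                    (univ.filter fun i : Fin n => (i:ℕ) < ω) := by
              ext p
              simp only [mem_filter, mem_univ, true_and, Finset.mem_product]
              omega
            rw [heq, Finset.card_product, hcard]
          have htot := Finset.card_filter_add_card_filter_not
            (s := (univ : Finset (Fin n × Fin n)))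
            (p := fun p : Fin n × Fin n => ω ≤ max (p.1:ℕ) (p.2:ℕ))
          have huniv : (univ : Finset (Fin n × Fin n)).card = n * n := by
            simp [Finset.card_univ]
          have hcard' : (univ.filter fun p : Fin n × Fin n => ω ≤ max (p.1:ℕ) (p.2:ℕ)).card
              = n * n - ω * ω := by omega
          rw [hcard', nsmul_eq_mul]
          have hωn2 : ω * ω ≤ n * n := Nat.mul_le_mul hωn hωn
          push_cast [Nat.cast_sub hωn2]
          ring_nf
  exact hσup.trans_lt (part1.trans_le hτlow)
end

section
/- Let G be a simple graph on n vertices with adjacency matrix A and clique number ω, and let D[i,j] = (n²)^(n - max(i,j)). Then every permutation matrix P minimizing L(P) = ⟨Pᵀ(J-I-A)P, D⟩ over all n×n permutation matrices places a maximum clique of G in the first ω positions: the vertices mapped to positions 1,...,ω form a clique of size ω. -/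
open Finset

/-- Every permutation minimizing `⟨Pᵀ(J-I-A)P, D⟩` places a maximum clique of `G`
in the first ω positions. -/
theorem minimizer_places_max_clique (n ω : ℕ) (G : SimpleGraph (Fin n))
    [DecidableRel G.Adj] (hω : G.cliqueNum = ω) (σ : Equiv.Perm (Fin n))
    (hmin : ∀ τ : Equiv.Perm (Fin n),
      (∑ i : Fin n, ∑ j : Fin n,
          ((1 : ℝ) - (if σ i = σ j then 1 else 0) - G.adjMatrix ℝ (σ i) (σ j)) *
            ((n : ℝ) ^ 2) ^ (n - 1 - max (i : ℕ) (j : ℕ))) ≤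
        ∑ i : Fin n, ∑ j : Fin n,
          ((1 : ℝ) - (if τ i = τ j then 1 else 0) - G.adjMatrix ℝ (τ i) (τ j)) *
            ((n : ℝ) ^ 2) ^ (n - 1 - max (i : ℕ) (j : ℕ))) :
    G.IsNClique ω ((Finset.univ.filter fun i : Fin n => (i : ℕ) < ω).image σ) := by
  classical
  obtain ⟨s, hs⟩ := G.exists_isNClique_cliqueNum
  rw [hω] at hs
  have hωn : ω ≤ n := by
    have h1 := Finset.card_le_univ s
    rw [hs.card_eq] at h1
    simpa using h1
  -- the filter has card ω
  have hfilt : (Finset.univ.filter fun i : Fin n => (i : ℕ) < ω)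
      = Finset.map (Fin.castLEEmb hωn) Finset.univ := by
    ext i
    simp only [mem_filter, mem_univ, true_and, Finset.mem_map, Fin.castLEEmb,
      Function.Embedding.coeFn_mk]
    constructor
    · intro hi
      refine ⟨⟨(i : ℕ), hi⟩, ?_⟩
      ext
      simp [Fin.castLE]
    · rintro ⟨j, rfl⟩
      exact j.isLt
  have hcard : (Finset.univ.filter fun i : Fin n => (i : ℕ) < ω).card = ω := by
    rw [hfilt, Finset.card_map, Finset.card_univ, Fintype.card_fin]
  set B : ℝ := (n : ℝ) ^ 2 with hB
  set f : Equiv.Perm (Fin n) → Fin n → Fin n → ℝ := fun τ i j =>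
    ((1 : ℝ) - (if τ i = τ j then 1 else 0) - G.adjMatrix ℝ (τ i) (τ j)) *
      B ^ (n - 1 - max (i : ℕ) (j : ℕ)) with hf
  -- the coefficient of each term
  have hcoeff : ∀ (τ : Equiv.Perm (Fin n)) (i j : Fin n),
      ((1 : ℝ) - (if τ i = τ j then 1 else 0) - G.adjMatrix ℝ (τ i) (τ j))
        = if i = j then 0 else (if G.Adj (τ i) (τ j) then 0 else 1) := by
    intro τ i j
    by_cases hij : i = j
    · subst hij
      simp [SimpleGraph.adjMatrix_apply]
    · have hne : τ i ≠ τ j := fun h => hij (τ.injective h)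
      by_cases hadj : G.Adj (τ i) (τ j) <;>
        simp [SimpleGraph.adjMatrix_apply, hne, hij, hadj]
  -- key claim: the first ω positions under σ are pairwise adjacent
  have key : ∀ a b : Fin n, (a : ℕ) < ω → (b : ℕ) < ω → a ≠ b → G.Adj (σ a) (σ b) := by
    intro a b ha hb hab
    by_contra hadj
    have hn1 : 1 ≤ n := Nat.one_le_iff_ne_zero.mpr (by rintro rfl; exact a.elim0)
    have hB1 : (1 : ℝ) ≤ B := by
      rw [hB]
      have : (1 : ℝ) ≤ (n : ℝ) := by exact_mod_cast hn1
      nlinarith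
    have hB0 : (0 : ℝ) < B := lt_of_lt_of_le one_pos hB1
    have hω1 : 1 ≤ ω := Nat.one_le_iff_ne_zero.mpr (by rintro rfl; exact Nat.not_lt_zero _ ha)
    -- nonnegativity of all terms
    have hnonneg : ∀ (τ : Equiv.Perm (Fin n)) (i j : Fin n), 0 ≤ f τ i j := by
      intro τ i j
      rw [hf]
      dsimp only
      rw [hcoeff]
      have hp : (0 : ℝ) ≤ B ^ (n - 1 - max (i : ℕ) (j : ℕ)) := le_of_lt (pow_pos hB0 _)
      by_cases hij : i = j
      · simp [hij]
      · by_cases hadj' : G.Adj (τ i) (τ j) <;> simp [hij, hadj', hp]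
    by_cases hcase : ω < n
    · -- main case: build τ placing the clique s in the first ω positions
      have hc1 : Fintype.card {i : Fin n // (i : ℕ) < ω} = Fintype.card {x : Fin n // x ∈ s} := by
        rw [Fintype.card_subtype, hcard,
          show Fintype.card {x : Fin n // x ∈ s} = s.card from Fintype.card_coe s, hs.card_eq]
      set e := Fintype.equivOfCardEq hc1 with he
      set τ := e.extendSubtype with hτ
      have hτmem : ∀ i : Fin n, (i : ℕ) < ω → τ i ∈ s := fun i hi =>
        e.extendSubtype_mem i hi
      -- each term of L(τ) is at most B ^ (n - 1 - ω)
      have hle : ∀ i j : Fin n, f τ i j ≤ B ^ (n - 1 - ω) := by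
        intro i j
        rw [hf]; dsimp only; rw [hcoeff]
        have hp0 : (0 : ℝ) < B ^ (n - 1 - ω) := pow_pos hB0 _
        by_cases hij : i = j
        · simp [hij, le_of_lt hp0]
        · by_cases hadj' : G.Adj (τ i) (τ j)
          · simp [hij, hadj', le_of_lt hp0]
          · simp only [hij, hadj', if_false, if_true, one_mul]
            -- if max i j < ω then τ i, τ j are distinct members of the clique s: contradiction
            by_cases hm : max (i : ℕ) (j : ℕ) < ω
            · exfalso
              have hi : (i : ℕ) < ω := lt_of_le_of_lt (le_max_left _ _) hm
              have hj : (j : ℕ) < ω := lt_of_le_of_lt (le_max_right _ _) hm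
              have hti := hτmem i hi
              have htj := hτmem j hj
              have hne : τ i ≠ τ j := fun h => hij (τ.injective h)
              exact hadj' (hs.isClique hti htj hne)
            · push_neg at hm
              exact pow_le_pow_right₀ hB1 (Nat.sub_le_sub_left hm (n - 1))
      -- but the diagonal term at 0 is zero, giving a strict total bound
      have hzero : f τ ⟨0, hn1⟩ ⟨0, hn1⟩ = 0 := by
        rw [hf]; dsimp only; rw [hcoeff]; simp
      have hLτ : (∑ i : Fin n, ∑ j : Fin n, f τ i j) < B ^ (n - ω) := by
        have hlt : (∑ p ∈ (Finset.univ ×ˢ Finset.univ : Finset (Fin n × Fin n)),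
            f τ p.1 p.2) < ∑ _p ∈ (Finset.univ ×ˢ Finset.univ : Finset (Fin n × Fin n)),
            B ^ (n - 1 - ω) := by
          apply Finset.sum_lt_sum (fun p _ => hle p.1 p.2)
          refine ⟨(⟨0, hn1⟩, ⟨0, hn1⟩), Finset.mem_product.mpr ⟨Finset.mem_univ _, Finset.mem_univ _⟩, ?_⟩
          rw [hzero]
          exact pow_pos hB0 _
        rw [Finset.sum_product] at hlt
        rw [Finset.sum_const, Finset.card_product, Finset.card_univ, Fintype.card_fin] at hlt
        calc (∑ i : Fin n, ∑ j : Fin n, f τ i j) < (n * n) • B ^ (n - 1 - ω) := hlt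
          _ = B ^ (n - ω) := by
              rw [nsmul_eq_mul]
              push_cast
              rw [hB]
              have hexp : n - ω = (n - 1 - ω) + 1 := by omega
              rw [hexp, pow_succ]
              ring
      -- lower bound for L(σ)
      have hfab : f σ a b = B ^ (n - 1 - max (a : ℕ) (b : ℕ)) := by
        rw [hf]; dsimp only; rw [hcoeff]
        simp [hab, hadj]
      have hge : B ^ (n - ω) ≤ f σ a b := by
        rw [hfab]
        apply pow_le_pow_right₀ hB1
        omega
      have h1 : f σ a b ≤ ∑ j : Fin n, f σ a j :=
        Finset.single_le_sum (fun j _ => hnonneg σ a j) (Finset.mem_univ b)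
      have h2 : (∑ j : Fin n, f σ a j) ≤ ∑ i : Fin n, ∑ j : Fin n, f σ i j :=
        Finset.single_le_sum (fun i _ => Finset.sum_nonneg fun j _ => hnonneg σ i j)
          (Finset.mem_univ a)
      have hmin' := hmin τ
      have hge' : B ^ (n - ω) ≤ ((1 : ℝ) - (if σ a = σ b then 1 else 0) -
          G.adjMatrix ℝ (σ a) (σ b)) * B ^ (n - 1 - max (a : ℕ) (b : ℕ)) := hge
      rw [hf] at hLτ h1 h2
      dsimp only at hLτ h1 h2
      linarith
    · -- degenerate case ω = n: the whole graph is a clique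
      have hωeq : ω = n := le_antisymm hωn (not_lt.mp hcase)
      have hsuniv : s = Finset.univ := Finset.eq_univ_of_card s (by simp [hs.card_eq, hωeq])
      have hne : σ a ≠ σ b := fun h => hab (σ.injective h)
      exact hadj (hs.isClique (hsuniv ▸ Finset.mem_univ (σ a))
        (hsuniv ▸ Finset.mem_univ (σ b)) hne)
  constructor
  · intro x hx y hy hxy
    simp only [coe_image, Set.mem_image, mem_coe, mem_filter, mem_univ, true_and] at hx hy
    obtain ⟨i, hi, rfl⟩ := hx
    obtain ⟨j, hj, rfl⟩ := hy
    exact key i j hi hj (fun h => hxy (by rw [h]))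
  · rw [Finset.card_image_of_injective _ σ.injective, hcard]
end

section
/- Let G be a simple graph on n vertices containing a clique C of size k. For any permutation σ placing the vertices of C in positions 1,...,k, the objective L(σ) = Σ_{i,j} M[σ(i),σ(j)]·(n²)^(n-max(i,j)) satisfies L(σ) ≤ (n² - k²)·(n²)^(n-k-1), where M = J - I - A has entries in {0,1}. -/
open Finset

/-- If `σ` places a clique `C` of size `k` in the first `k` positions, then the objective
is at most `(n² - k²)·(n²)^(n-k-1)`. -/
theorem clique_placement_cost_bound (n k : ℕ) (G : SimpleGraph (Fin n))
    [DecidableRel G.Adj] (C : Finset (Fin n)) (hC : G.IsNClique k C)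
    (σ : Equiv.Perm (Fin n))
    (hσ : (Finset.univ.filter fun i : Fin n => (i : ℕ) < k).image σ = C) :
    (∑ i : Fin n, ∑ j : Fin n,
        ((1 : ℝ) - (if σ i = σ j then 1 else 0) - G.adjMatrix ℝ (σ i) (σ j)) *
          ((n : ℝ) ^ 2) ^ (n - 1 - max (i : ℕ) (j : ℕ))) ≤
      ((n : ℝ) ^ 2 - (k : ℝ) ^ 2) * ((n : ℝ) ^ 2) ^ (n - k - 1) := by
  classical
  rcases Nat.eq_zero_or_pos n with hn | hn
  · subst hn
    have hk : k = 0 := by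
      have := hC.card_eq
      simp [Finset.eq_empty_of_isEmpty C] at this
      omega
    subst hk
    simp
  have hcard : (Finset.univ.filter fun i : Fin n => (i : ℕ) < k).card = k := by
    have h := congrArg Finset.card hσ
    rwa [Finset.card_image_of_injective _ σ.injective, hC.card_eq] at h
  have hk : k ≤ n := by
    calc k = _ := hcard.symm
    _ ≤ (Finset.univ : Finset (Fin n)).card := Finset.card_le_card (Finset.filter_subset _ _)
    _ = n := by simp
  set X : ℝ := ((n : ℝ) ^ 2) ^ (n - k - 1) with hX
  have hbase : (1 : ℝ) ≤ (n : ℝ) ^ 2 := by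
    have : (1 : ℝ) ≤ (n : ℝ) := by exact_mod_cast hn
    nlinarith
  have hXpos : (0 : ℝ) ≤ X := by positivity
  have key : ∀ i j : Fin n,
      ((1 : ℝ) - (if σ i = σ j then 1 else 0) - G.adjMatrix ℝ (σ i) (σ j)) *
        ((n : ℝ) ^ 2) ^ (n - 1 - max (i : ℕ) (j : ℕ)) ≤
      (if (i : ℕ) < k ∧ (j : ℕ) < k then 0 else X) := by
    intro i j
    by_cases h : (i : ℕ) < k ∧ (j : ℕ) < k
    · simp only [h, if_true]
      have hi : σ i ∈ C := by
        rw [← hσ]; exact Finset.mem_image_of_mem σ (by simp [h.1])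
      have hj : σ j ∈ C := by
        rw [← hσ]; exact Finset.mem_image_of_mem σ (by simp [h.2])
      by_cases he : σ i = σ j
      · simp [he]
      · have hadj : G.Adj (σ i) (σ j) := hC.1 hi hj he
        simp [he, hadj]
    · simp only [h, if_false]
      have hc : ((1 : ℝ) - (if σ i = σ j then 1 else 0) - G.adjMatrix ℝ (σ i) (σ j)) ≤ 1 := by
        have h1 : (0 : ℝ) ≤ (if σ i = σ j then (1:ℝ) else 0) := by positivity
        have h2 : (0 : ℝ) ≤ G.adjMatrix ℝ (σ i) (σ j) := by
          simp [SimpleGraph.adjMatrix]; positivity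
        linarith
      have hexp : n - 1 - max (i : ℕ) (j : ℕ) ≤ n - k - 1 := by omega
      have hp : ((n : ℝ) ^ 2) ^ (n - 1 - max (i : ℕ) (j : ℕ)) ≤ X := by
        exact pow_le_pow_right₀ hbase hexp
      have hp0 : (0 : ℝ) ≤ ((n : ℝ) ^ 2) ^ (n - 1 - max (i : ℕ) (j : ℕ)) := by positivity
      calc _ ≤ 1 * ((n : ℝ) ^ 2) ^ (n - 1 - max (i : ℕ) (j : ℕ)) :=
              mul_le_mul_of_nonneg_right hc hp0
        _ = _ := one_mul _
        _ ≤ X := hp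
  have hsum1 : ∀ s : Finset (Fin n), (∑ i ∈ s, if (i : ℕ) < k then (1:ℝ) else 0)
      = ((s.filter fun i : Fin n => (i : ℕ) < k).card : ℝ) := by
    intro s; rw [Finset.sum_boole]
  calc (∑ i : Fin n, ∑ j : Fin n,
        ((1 : ℝ) - (if σ i = σ j then 1 else 0) - G.adjMatrix ℝ (σ i) (σ j)) *
          ((n : ℝ) ^ 2) ^ (n - 1 - max (i : ℕ) (j : ℕ)))
      ≤ ∑ i : Fin n, ∑ j : Fin n, (if (i : ℕ) < k ∧ (j : ℕ) < k then 0 else X) :=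
        Finset.sum_le_sum fun i _ => Finset.sum_le_sum fun j _ => key i j
    _ = ∑ i : Fin n, ∑ j : Fin n,
          (X - (if (i : ℕ) < k then (1:ℝ) else 0) * (if (j : ℕ) < k then (1:ℝ) else 0) * X) := by
        apply Finset.sum_congr rfl; intro i _
        apply Finset.sum_congr rfl; intro j _
        by_cases hi : (i : ℕ) < k <;> by_cases hj : (j : ℕ) < k <;>
          simp [hi, hj]
    _ = ∑ i : Fin n, ((n : ℝ) * X - (if (i : ℕ) < k then (1:ℝ) else 0) * ((k : ℝ) * X)) := by
        have A : (∑ j : Fin n, if (j : ℕ) < k then (1:ℝ) else 0) = (k : ℝ) := by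
          rw [hsum1, hcard]
        apply Finset.sum_congr rfl; intro i _
        rw [Finset.sum_sub_distrib, Finset.sum_const, Finset.card_univ, Fintype.card_fin,
          nsmul_eq_mul]
        congr 1
        simp only [mul_assoc, ← Finset.mul_sum, ← Finset.sum_mul, A]
    _ = ((n : ℝ) ^ 2 - (k : ℝ) ^ 2) * X := by
        have A : (∑ i : Fin n, if (i : ℕ) < k then (1:ℝ) else 0) = (k : ℝ) := by
          rw [hsum1, hcard]
        rw [Finset.sum_sub_distrib, Finset.sum_const, Finset.card_univ, Fintype.card_fin,
          nsmul_eq_mul, ← Finset.sum_mul, A]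
        ring
end

section
/- Let G be a simple graph on n vertices with clique number ω, and let D[i,j] = (n²)^(n-max(i,j)). Then min over permutation matrices P of ⟨Pᵀ(J-I-A)P, D⟩ is strictly less than (n²)^(n-ω), and the first ω positions under any minimizer induce a complete subgraph; hence the clique number can be recovered as the largest k such that some permutation makes the leading k×k block of Pᵀ(J-I-A)P zero off-diagonal. -/
open Finset

private lemma card_filter_lt' (n k : ℕ) (hk : k ≤ n) :
    ((univ : Finset (Fin n)).filter fun i : Fin n => (i:ℕ) < k).card = k := by
  rw [show ((univ : Finset (Fin n)).filter fun i : Fin n => (i:ℕ) < k)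
      = (univ : Finset (Fin k)).map (Fin.castLEEmb hk) by
    ext i
    simp only [mem_filter, mem_univ, true_and, mem_map, Fin.castLEEmb,
      Function.Embedding.coeFn_mk, Fin.ext_iff, Fin.coe_castLE]
    constructor
    · intro h; exact ⟨⟨i, h⟩, rfl⟩
    · rintro ⟨j, hj⟩; have := j.2; omega]
  simp

private lemma term_eq' (n : ℕ) (G : SimpleGraph (Fin n)) [DecidableRel G.Adj]
    (σ : Equiv.Perm (Fin n)) (i j : Fin n) :
    ((1 : ℝ) - (if σ i = σ j then 1 else 0) - G.adjMatrix ℝ (σ i) (σ j)) *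
      ((n : ℝ) ^ 2) ^ (n - 1 - max (i : ℕ) (j : ℕ)) =
    if i ≠ j ∧ ¬ G.Adj (σ i) (σ j) then ((n : ℝ) ^ 2) ^ (n - 1 - max (i : ℕ) (j : ℕ))
      else 0 := by
  rcases eq_or_ne i j with rfl | hij
  · simp
  · have hne : σ i ≠ σ j := fun h => hij (σ.injective h)
    by_cases hadj : G.Adj (σ i) (σ j) <;>
      simp [SimpleGraph.adjMatrix_apply, hne, hij, hadj]

private lemma clique_of_block' (n k : ℕ) (hk : k ≤ n) (G : SimpleGraph (Fin n))
    [DecidableRel G.Adj] (σ : Equiv.Perm (Fin n))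
    (h : ∀ i j : Fin n, (i:ℕ) < k → (j:ℕ) < k → i ≠ j → G.Adj (σ i) (σ j)) :
    G.IsNClique k ((univ.filter fun i : Fin n => (i:ℕ) < k).image σ) := by
  constructor
  · intro x hx y hy hxy
    simp only [coe_image, Set.mem_image, mem_coe, mem_filter, mem_univ, true_and] at hx hy
    obtain ⟨i, hi, rfl⟩ := hx; obtain ⟨j, hj, rfl⟩ := hy
    exact h i j hi hj (fun e => hxy (by rw [e]))
  · rw [card_image_of_injective _ σ.injective, card_filter_lt' n k hk]

/-- The minimum objective value is strictly less than `(n²)^(n-ω)`, every minimizer places a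
maximum clique in the first ω positions, and the clique number is the largest `k` such that
some permutation makes the leading `k×k` block of `Pᵀ(J-I-A)P` zero off-diagonal. -/
theorem clique_number_recovery (n ω : ℕ) (hn : 2 ≤ n) (G : SimpleGraph (Fin n))
    [DecidableRel G.Adj] (hω : G.cliqueNum = ω) (hω1 : 1 ≤ ω) :
    ((⨅ σ : Equiv.Perm (Fin n), ∑ i : Fin n, ∑ j : Fin n,
        ((1 : ℝ) - (if σ i = σ j then 1 else 0) - G.adjMatrix ℝ (σ i) (σ j)) *
          ((n : ℝ) ^ 2) ^ (n - 1 - max (i : ℕ) (j : ℕ))) < ((n : ℝ) ^ 2) ^ (n - ω)) ∧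
    (∀ σ : Equiv.Perm (Fin n),
      (∀ τ : Equiv.Perm (Fin n),
        (∑ i : Fin n, ∑ j : Fin n,
            ((1 : ℝ) - (if σ i = σ j then 1 else 0) - G.adjMatrix ℝ (σ i) (σ j)) *
              ((n : ℝ) ^ 2) ^ (n - 1 - max (i : ℕ) (j : ℕ))) ≤
          ∑ i : Fin n, ∑ j : Fin n,
            ((1 : ℝ) - (if τ i = τ j then 1 else 0) - G.adjMatrix ℝ (τ i) (τ j)) *
              ((n : ℝ) ^ 2) ^ (n - 1 - max (i : ℕ) (j : ℕ))) →
      G.IsNClique ω ((Finset.univ.filter fun i : Fin n => (i : ℕ) < ω).image σ)) ∧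
    ω = sSup {k : ℕ | ∃ σ : Equiv.Perm (Fin n), k ≤ n ∧
        ∀ i j : Fin n, (i : ℕ) < k → (j : ℕ) < k → i ≠ j →
          (1 : ℝ) - (if σ i = σ j then 1 else 0) - G.adjMatrix ℝ (σ i) (σ j) = 0} := by
  -- basic facts
  have hn2 : (2:ℝ) ≤ (n:ℝ) := by exact_mod_cast hn
  have hbase : (1:ℝ) ≤ (n:ℝ)^2 := by nlinarith
  have hpow : ∀ m : ℕ, (0:ℝ) < ((n:ℝ)^2)^m := fun m => pow_pos (by nlinarith) m
  -- a maximum clique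
  obtain ⟨s, hs⟩ := G.exists_isNClique_cliqueNum
  rw [hω] at hs
  have hωn : ω ≤ n := by
    rw [← hs.2]; simpa using card_le_card (subset_univ s)
  -- build the permutation σ₀ placing the clique first
  have hc1 : Fintype.card {i : Fin n // (i:ℕ) < ω} = ω := by
    rw [Fintype.card_subtype]; exact card_filter_lt' n ω hωn
  have hc2 : Fintype.card {i : Fin n // i ∈ s} = ω := by
    rw [← hs.2]; exact Fintype.card_coe s
  have hc3 : Fintype.card {i : Fin n // ¬ (i:ℕ) < ω} = Fintype.card {i : Fin n // ¬ i ∈ s} := by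
    rw [Fintype.card_subtype_compl, Fintype.card_subtype_compl, hc1, hc2]
  let e : {i : Fin n // (i:ℕ) < ω} ≃ {i : Fin n // i ∈ s} :=
    Fintype.equivOfCardEq (hc1.trans hc2.symm)
  let f : {i : Fin n // ¬ (i:ℕ) < ω} ≃ {i : Fin n // ¬ i ∈ s} := Fintype.equivOfCardEq hc3
  let σ₀ : Equiv.Perm (Fin n) := Equiv.subtypeCongr e f
  have hσ₀ : ∀ i : Fin n, (i:ℕ) < ω → σ₀ i ∈ s := by
    intro i hi
    have : σ₀ i = ↑(e ⟨i, hi⟩) := by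
      simp [σ₀, Equiv.subtypeCongr, Equiv.Perm.subtypeCongr.apply, hi]
    rw [this]; exact (e ⟨i, hi⟩).2
  have hadj₀ : ∀ i j : Fin n, (i:ℕ) < ω → (j:ℕ) < ω → i ≠ j → G.Adj (σ₀ i) (σ₀ j) := by
    intro i j hi hj hij
    exact hs.1 (hσ₀ i hi) (hσ₀ j hj) (fun h => hij (σ₀.injective h))
  -- value at σ₀ is small
  have h1 : (∑ i : Fin n, ∑ j : Fin n,
      ((1 : ℝ) - (if σ₀ i = σ₀ j then 1 else 0) - G.adjMatrix ℝ (σ₀ i) (σ₀ j)) *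
        ((n : ℝ) ^ 2) ^ (n - 1 - max (i : ℕ) (j : ℕ))) < ((n : ℝ) ^ 2) ^ (n - ω) := by
    rcases eq_or_lt_of_le hωn with heq | hlt
    · -- ω = n : all terms vanish
      have : ∀ i j : Fin n,
          ((1 : ℝ) - (if σ₀ i = σ₀ j then 1 else 0) - G.adjMatrix ℝ (σ₀ i) (σ₀ j)) *
            ((n : ℝ) ^ 2) ^ (n - 1 - max (i : ℕ) (j : ℕ)) = 0 := by
        intro i j
        rw [term_eq']
        rcases eq_or_ne i j with rfl | hij
        · simp
        · have hi : (i:ℕ) < ω := by have := i.2; omega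
          have hj : (j:ℕ) < ω := by have := j.2; omega
          simp [hij, hadj₀ i j hi hj hij]
      simp only [this, Finset.sum_const_zero]
      exact hpow _
    · -- ω < n
      have key : ∀ p : Fin n × Fin n,
          ((1 : ℝ) - (if σ₀ p.1 = σ₀ p.2 then 1 else 0) - G.adjMatrix ℝ (σ₀ p.1) (σ₀ p.2)) *
            ((n : ℝ) ^ 2) ^ (n - 1 - max (p.1 : ℕ) (p.2 : ℕ)) ≤ ((n : ℝ)^2)^(n - 1 - ω) := by
        rintro ⟨i, j⟩
        rw [term_eq']
        split_ifs with h
        · obtain ⟨hij, hnadj⟩ := h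
          have hmax : ω ≤ max (i:ℕ) (j:ℕ) := by
            by_contra hcon
            push_neg at hcon
            exact hnadj (hadj₀ i j (lt_of_le_of_lt (le_max_left _ _) hcon)
              (lt_of_le_of_lt (le_max_right _ _) hcon) hij)
          exact pow_le_pow_right₀ hbase (Nat.sub_le_sub_left hmax _)
        · exact le_of_lt (hpow _)
      have hsum : (∑ i : Fin n, ∑ j : Fin n,
          ((1 : ℝ) - (if σ₀ i = σ₀ j then 1 else 0) - G.adjMatrix ℝ (σ₀ i) (σ₀ j)) *
            ((n : ℝ) ^ 2) ^ (n - 1 - max (i : ℕ) (j : ℕ)))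
          = ∑ p : Fin n × Fin n,
            ((1 : ℝ) - (if σ₀ p.1 = σ₀ p.2 then 1 else 0) - G.adjMatrix ℝ (σ₀ p.1) (σ₀ p.2)) *
              ((n : ℝ) ^ 2) ^ (n - 1 - max (p.1 : ℕ) (p.2 : ℕ)) :=
        (Finset.sum_product' _ _ _).symm
      rw [hsum]
      have hlt2 : (∑ p : Fin n × Fin n,
          ((1 : ℝ) - (if σ₀ p.1 = σ₀ p.2 then 1 else 0) - G.adjMatrix ℝ (σ₀ p.1) (σ₀ p.2)) *
            ((n : ℝ) ^ 2) ^ (n - 1 - max (p.1 : ℕ) (p.2 : ℕ)))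
          < ∑ _p : Fin n × Fin n, ((n : ℝ)^2)^(n - 1 - ω) := by
        refine Finset.sum_lt_sum (fun p _ => key p) ⟨(⟨0, by omega⟩, ⟨0, by omega⟩), mem_univ _, ?_⟩
        rw [term_eq']
        simp only [ne_eq, not_true_eq_false, false_and, if_false]
        exact hpow _
      refine lt_of_lt_of_le hlt2 (le_of_eq ?_)
      have hexp : n - ω = (n - 1 - ω) + 1 := by omega
      rw [Finset.sum_const, card_univ, Fintype.card_prod, Fintype.card_fin,
        nsmul_eq_mul, hexp, pow_succ]
      push_cast
      ring
  refine ⟨?_, ?_, ?_⟩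
  · -- part 1
    refine lt_of_le_of_lt (ciInf_le ?_ σ₀) h1
    exact Finite.bddBelow_range _
  · -- part 2
    intro σ hmin
    have hσlt := lt_of_le_of_lt (hmin σ₀) h1
    have hadj : ∀ i j : Fin n, (i:ℕ) < ω → (j:ℕ) < ω → i ≠ j → G.Adj (σ i) (σ j) := by
      intro i j hi hj hij
      by_contra hnadj
      have hterm : ((1 : ℝ) - (if σ i = σ j then 1 else 0) - G.adjMatrix ℝ (σ i) (σ j)) *
          ((n : ℝ) ^ 2) ^ (n - 1 - max (i : ℕ) (j : ℕ))
          = ((n : ℝ) ^ 2) ^ (n - 1 - max (i : ℕ) (j : ℕ)) := by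
        rw [term_eq']; simp [hij, hnadj]
      have hnn : ∀ a b : Fin n, 0 ≤ ((1 : ℝ) - (if σ a = σ b then 1 else 0) -
          G.adjMatrix ℝ (σ a) (σ b)) * ((n : ℝ) ^ 2) ^ (n - 1 - max (a : ℕ) (b : ℕ)) := by
        intro a b
        rw [term_eq']
        split_ifs
        · exact le_of_lt (hpow _)
        · exact le_refl 0
      have hsingle : ((n : ℝ) ^ 2) ^ (n - 1 - max (i : ℕ) (j : ℕ)) ≤
          ∑ a : Fin n, ∑ b : Fin n,
            ((1 : ℝ) - (if σ a = σ b then 1 else 0) - G.adjMatrix ℝ (σ a) (σ b)) *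
              ((n : ℝ) ^ 2) ^ (n - 1 - max (a : ℕ) (b : ℕ)) := by
        rw [← hterm]
        calc ((1 : ℝ) - (if σ i = σ j then 1 else 0) - G.adjMatrix ℝ (σ i) (σ j)) *
              ((n : ℝ) ^ 2) ^ (n - 1 - max (i : ℕ) (j : ℕ))
            ≤ ∑ b : Fin n, ((1 : ℝ) - (if σ i = σ b then 1 else 0) -
                G.adjMatrix ℝ (σ i) (σ b)) * ((n : ℝ) ^ 2) ^ (n - 1 - max (i : ℕ) (b : ℕ)) :=
              Finset.single_le_sum (fun b _ => hnn i b) (mem_univ j)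
          _ ≤ _ := Finset.single_le_sum (fun a _ => Finset.sum_nonneg fun b _ => hnn a b)
              (mem_univ i)
      have hge : ((n : ℝ) ^ 2) ^ (n - ω) ≤ ((n : ℝ) ^ 2) ^ (n - 1 - max (i : ℕ) (j : ℕ)) := by
        refine pow_le_pow_right₀ hbase ?_
        omega
      linarith
    exact clique_of_block' n ω hωn G σ hadj
  · -- part 3
    have hmem : ω ∈ {k : ℕ | ∃ σ : Equiv.Perm (Fin n), k ≤ n ∧
        ∀ i j : Fin n, (i : ℕ) < k → (j : ℕ) < k → i ≠ j →
          (1 : ℝ) - (if σ i = σ j then 1 else 0) - G.adjMatrix ℝ (σ i) (σ j) = 0} := by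
      refine ⟨σ₀, hωn, fun i j hi hj hij => ?_⟩
      have h := hadj₀ i j hi hj hij
      have : σ₀ i ≠ σ₀ j := fun e => hij (σ₀.injective e)
      simp [this, SimpleGraph.adjMatrix_apply, h]
    have hub : ∀ k ∈ {k : ℕ | ∃ σ : Equiv.Perm (Fin n), k ≤ n ∧
        ∀ i j : Fin n, (i : ℕ) < k → (j : ℕ) < k → i ≠ j →
          (1 : ℝ) - (if σ i = σ j then 1 else 0) - G.adjMatrix ℝ (σ i) (σ j) = 0}, k ≤ ω := by
      rintro k ⟨σ, hkn, hk⟩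
      have hadj : ∀ i j : Fin n, (i:ℕ) < k → (j:ℕ) < k → i ≠ j → G.Adj (σ i) (σ j) := by
        intro i j hi hj hij
        have h := hk i j hi hj hij
        have hne : σ i ≠ σ j := fun e => hij (σ.injective e)
        by_contra hnadj
        rw [if_neg hne] at h
        rw [SimpleGraph.adjMatrix_apply, if_neg hnadj] at h
        norm_num at h
      have hcl := clique_of_block' n k hkn G σ hadj
      have := hcl.isClique.card_le_cliqueNum
      rw [hcl.card_eq, hω] at this
      exact this
    refine le_antisymm (le_csSup ⟨n, fun k hk => ?_⟩ hmem) (csSup_le ⟨ω, hmem⟩ hub)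
    obtain ⟨σ, hkn, _⟩ := hk
    exact hkn
end
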